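/- Let q ∈ (0,1), D > 0, and let (ξ_k)_{k≥1} be a sequence of positive reals with ξ_k ≥ D q^{−k} for all k ≥ 1. Then for every integer k ≥ 1 the elementary symmetric sum g_k := Σ_{1 ≤ j₁ < j₂ < ⋯ < j_k} 1/(ξ_{j₁} ξ_{j₂} ⋯ ξ_{j_k}) converges and satisfies g_k ≤ q^{k(k+1)/2} / (D(1−q))^k. -/
import Mathlib

lemma pi_tsum {k : ℕ} (w : Fin k → ℕ → ℝ) (hw : ∀ i n, 0 ≤ w i n)
    (hs : ∀ i, Summable (w i)) :
    Summable (fun g : Fin k → ℕ => ∏ i, w i (g i)) ∧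
    (∑' g : Fin k → ℕ, ∏ i, w i (g i)) = ∏ i, ∑' n, w i n := by
  induction k with
  | zero =>
    refine ⟨.of_finite, ?_⟩
    rw [tsum_eq_single (fun i => i.elim0)
      (fun b hb => absurd (funext fun i => i.elim0) hb)]
    simp
  | succ k ih =>
    obtain ⟨ihs, iht⟩ := ih (fun i => w i.succ) (fun i n => hw _ _) (fun i => hs _)
    set e := Fin.consEquiv (fun _ : Fin (k+1) => ℕ) with he
    have hcomp : ((fun g : Fin (k+1) → ℕ => ∏ i, w i (g i)) ∘ e)
        = fun p : ℕ × (Fin k → ℕ) => w 0 p.1 * ∏ i : Fin k, w i.succ (p.2 i) := by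
      funext p
      simp [he, Fin.prod_univ_succ, Fin.consEquiv]
    have hsm : Summable (fun p : ℕ × (Fin k → ℕ) => w 0 p.1 * ∏ i : Fin k, w i.succ (p.2 i)) :=
      Summable.mul_of_nonneg (f := fun n => w 0 n)
        (g := fun g : Fin k → ℕ => ∏ i : Fin k, w i.succ (g i)) (hs 0) ihs
        (fun n => hw 0 n) (fun g => Finset.prod_nonneg fun i _ => hw _ _)
    have hse : Summable (fun g : Fin (k+1) → ℕ => ∏ i, w i (g i)) := by
      rw [← e.summable_iff, hcomp]; exact hsm
    refine ⟨hse, ?_⟩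
    have h1 : (∑' g : Fin (k+1) → ℕ, ∏ i, w i (g i))
        = ∑' p : ℕ × (Fin k → ℕ), w 0 p.1 * ∏ i : Fin k, w i.succ (p.2 i) := by
      rw [← e.tsum_eq (fun g => ∏ i, w i (g i))]
      exact tsum_congr fun p => congrFun hcomp p
    have h2 : ((∑' n, w 0 n) * ∑' g : Fin k → ℕ, ∏ i : Fin k, w i.succ (g i))
        = ∑' p : ℕ × (Fin k → ℕ), w 0 p.1 * ∏ i : Fin k, w i.succ (p.2 i) :=
      tsum_mul_tsum_of_summable_norm (f := fun n => w 0 n)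
        (g := fun g : Fin k → ℕ => ∏ i : Fin k, w i.succ (g i))
        (by simpa [abs_of_nonneg (hw 0 _)] using hs 0)
        (by
          refine ihs.congr fun g => ?_
          rw [Real.norm_eq_abs, abs_of_nonneg (Finset.prod_nonneg fun i _ => hw _ _)])
    rw [h1, ← h2, iht, Fin.prod_univ_succ]

theorem stmt12 (q : ℝ) (h0 : 0 < q) (h1 : q < 1) (D : ℝ) (hD : 0 < D)
    (ξ : ℕ → ℝ) (hpos : ∀ k : ℕ, 1 ≤ k → 0 < ξ k)
    (hge : ∀ k : ℕ, 1 ≤ k → D * q ^ (-(k : ℤ)) ≤ ξ k)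
    (k : ℕ) (hk : 1 ≤ k) :
    Summable (fun t : {f : Fin k → ℕ // StrictMono f ∧ ∀ i, 1 ≤ f i} =>
      ∏ i, 1 / ξ (t.1 i)) ∧
    (∑' t : {f : Fin k → ℕ // StrictMono f ∧ ∀ i, 1 ≤ f i}, ∏ i, 1 / ξ (t.1 i))
      ≤ q ^ (k * (k + 1) / 2) / (D * (1 - q)) ^ k := by
  have hq1 : (0:ℝ) < 1 - q := by linarith
  -- lower bound on values of a strictly monotone sequence
  have hlb : ∀ f : Fin k → ℕ, StrictMono f → (∀ i, 1 ≤ f i) →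
      ∀ i : Fin k, i.1 + 1 ≤ f i := by
    intro f hm hone i
    have key : ∀ m : ℕ, ∀ hm' : m < k, m + 1 ≤ f ⟨m, hm'⟩ := by
      intro m
      induction m with
      | zero => intro h; exact hone _
      | succ m ihm =>
        intro h
        have hm1 : m < k := Nat.lt_of_succ_lt h
        have h2 := ihm hm1
        have h3 : f ⟨m, hm1⟩ < f ⟨m+1, h⟩ := hm (Fin.mk_lt_mk.mpr (Nat.lt_succ_self m))
        omega
    have := key i.1 i.2
    simpa using this
  -- the dominating weights
  set w : Fin k → ℕ → ℝ := fun i n => q ^ n * (q ^ (i.1 + 1) / D) with hwdef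
  have hw : ∀ i n, 0 ≤ w i n := fun i n => by
    have := pow_pos h0 n
    have := pow_pos h0 (i.1+1)
    positivity
  have hs : ∀ i, Summable (w i) := fun i =>
    (summable_geometric_of_lt_one h0.le h1).mul_right _
  obtain ⟨hS, hT⟩ := pi_tsum w hw hs
  -- injection
  set ι : {f : Fin k → ℕ // StrictMono f ∧ ∀ i, 1 ≤ f i} → (Fin k → ℕ) :=
    fun t i => t.1 i - (i.1 + 1) with hιdef
  have hι : Function.Injective ι := by
    intro t s h
    apply Subtype.ext
    funext i
    have h1' := congrFun h i
    simp only [hιdef] at h1'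
    have := hlb t.1 t.2.1 t.2.2 i
    have := hlb s.1 s.2.1 s.2.2 i
    omega
  -- pointwise comparison
  have key : ∀ t : {f : Fin k → ℕ // StrictMono f ∧ ∀ i, 1 ≤ f i},
      (∏ i, 1 / ξ (t.1 i)) ≤ ∏ i, w i (ι t i) := by
    intro t
    refine Finset.prod_le_prod (fun i _ => ?_) (fun i _ => ?_)
    · have := hpos (t.1 i) (t.2.2 i); positivity
    · set n := t.1 i with hn
      have hn1 : 1 ≤ n := t.2.2 i
      have hn2 : i.1 + 1 ≤ n := hlb t.1 t.2.1 t.2.2 i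
      have hξ : D / q ^ n ≤ ξ n := by
        have := hge n hn1
        rwa [zpow_neg, zpow_natCast, ← div_eq_mul_inv] at this
      have hpos' : 0 < D / q ^ n := div_pos hD (pow_pos h0 n)
      have h3 : 1 / ξ n ≤ 1 / (D / q ^ n) := one_div_le_one_div_of_le hpos' hξ
      rw [one_div_div] at h3
      have hw' : w i (ι t i) = q ^ n / D := by
        simp only [hwdef, hιdef]
        rw [← hn, div_eq_mul_one_div, ← mul_assoc, ← pow_add, Nat.sub_add_cancel hn2,
          ← div_eq_mul_one_div]
      rw [hw']
      exact h3
  have hnneg : ∀ t : {f : Fin k → ℕ // StrictMono f ∧ ∀ i, 1 ≤ f i},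
      0 ≤ ∏ i, 1 / ξ (t.1 i) := fun t =>
    Finset.prod_nonneg fun i _ => by have := hpos (t.1 i) (t.2.2 i); positivity
  have hScomp : Summable fun t : {f : Fin k → ℕ // StrictMono f ∧ ∀ i, 1 ≤ f i} =>
      ∏ i, w i (ι t i) := hS.comp_injective hι
  have hsum : Summable (fun t : {f : Fin k → ℕ // StrictMono f ∧ ∀ i, 1 ≤ f i} =>
      ∏ i, 1 / ξ (t.1 i)) := Summable.of_nonneg_of_le hnneg key hScomp
  refine ⟨hsum, ?_⟩
  have hb1 : (∑' t : {f : Fin k → ℕ // StrictMono f ∧ ∀ i, 1 ≤ f i}, ∏ i, 1 / ξ (t.1 i))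
      ≤ ∑' g : Fin k → ℕ, ∏ i, w i (g i) :=
    Summable.tsum_le_tsum_of_inj ι hι (fun g _ => Finset.prod_nonneg fun i _ => hw i (g i))
      key hsum hS
  refine hb1.trans (le_of_eq ?_)
  rw [hT]
  have htsum : ∀ i : Fin k, (∑' n, w i n) = q ^ (i.1 + 1) / (D * (1 - q)) := by
    intro i
    simp only [hwdef]
    rw [tsum_mul_right, tsum_geometric_of_lt_one h0.le h1]
    field_simp
  rw [Finset.prod_congr rfl fun i _ => htsum i]
  rw [Finset.prod_div_distrib, Finset.prod_const, Finset.card_univ, Fintype.card_fin,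
    Finset.prod_pow_eq_pow_sum]
  congr 1
  have hsum2 : (∑ i : Fin k, (i.1 + 1)) = k * (k + 1) / 2 := by
    rw [Fin.sum_univ_eq_sum_range (fun i => i + 1)]
    have h2 : (∑ i ∈ Finset.range k, (i + 1)) = ∑ i ∈ Finset.range (k+1), i := by
      rw [Finset.sum_range_succ' (fun i => i) k]
      simp
    rw [h2, Finset.sum_range_id]
    simp [Nat.add_sub_cancel, Nat.mul_comm]
  rw [hsum2]
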